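/- Let p be a prime, G an elementary abelian p-group of rank 3, and A1 < A2 subgroups of G with |A1| = p and |A2| = p². Let A be the S-ring over G whose basic sets are the singletons {x} for x ∈ A1, the A1-cosets contained in A2 \ A1, and the A2-cosets contained in G \ A2 (the S-ring ℤC_p ≀ ℤC_p ≀ ℤC_p). Then |aut_G(A)| = p³. -/

import Mathlib

open Pointwise

/-! ### Cayley digraphs and CI-subsets (groups written additively) -/

/-- The arc set `R(S) = {(g, s+g) : g ∈ G, s ∈ S}` of the Cayley digraph `Cay(G,S)`. -/
def arcs {G : Type*} [AddGroup G] (S : Set G) : Set (G × G) :=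
  {a | ∃ s ∈ S, a.2 = s + a.1}

/-- The image `R^f` of a set of arcs under a permutation `f`. -/
def pmap {G : Type*} (f : Equiv.Perm G) (R : Set (G × G)) : Set (G × G) :=
  (fun a => (f a.1, f a.2)) '' R

/-- `S ⊆ G` is a CI-subset: every Cayley digraph isomorphic to `Cay(G,S)` is Cayley
isomorphic to it. -/
def IsCISubset {G : Type*} [AddGroup G] (S : Set G) : Prop :=
  ∀ T : Set G, (∃ f : Equiv.Perm G, pmap f (arcs S) = arcs T) →
    ∃ φ : G ≃+ G, ⇑φ '' S = T

/-- `G` is a DCI-group: every subset of `G` is a CI-subset. -/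
def IsDCI (G : Type*) [AddGroup G] : Prop := ∀ S : Set G, IsCISubset S

/-! ### S-rings, given by their partitions into basic sets.

The condition that the ℤ-span of the blocks is a subring of the group ring is encoded
combinatorially: the number of ways to write an element as a sum `x + y` with `x ∈ X`,
`y ∈ Y` (for blocks `X, Y`) is constant on each block. -/

structure SRing (G : Type*) [AddGroup G] where
  blocks : Set (Set G)
  nonempty_mem : ∀ X ∈ blocks, X.Nonempty
  existsUnique_mem : ∀ g : G, ∃! X, X ∈ blocks ∧ g ∈ X
  zero_mem : ({0} : Set G) ∈ blocks
  neg_mem : ∀ X ∈ blocks, -X ∈ blocks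
  count_const : ∀ X ∈ blocks, ∀ Y ∈ blocks, ∀ Z ∈ blocks, ∀ z ∈ Z, ∀ z' ∈ Z,
    {a : G × G | a.1 ∈ X ∧ a.2 ∈ Y ∧ a.1 + a.2 = z}.ncard =
      {a : G × G | a.1 ∈ X ∧ a.2 ∈ Y ∧ a.1 + a.2 = z'}.ncard

/-- The automorphisms of an S-ring with family of basic sets `Bl`:
permutations preserving each arc set `R(X)`, `X ∈ Bl`. -/
def autPerm {G : Type*} [AddGroup G] (Bl : Set (Set G)) : Set (Equiv.Perm G) :=
  {f | ∀ X ∈ Bl, pmap f (arcs X) = arcs X}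

/-- The isomorphisms from an S-ring with basic sets `Bl` onto some S-ring over `G`. -/
def isoPerm {G : Type*} [AddGroup G] (Bl : Set (Set G)) : Set (Equiv.Perm G) :=
  {f | ∃ B : SRing G,
    {R | ∃ X ∈ Bl, R = pmap f (arcs X)} = {R | ∃ Y ∈ B.blocks, R = arcs Y}}

/-- An S-ring is CI if `iso(A) = Aut(A)Aut(G)` (composition: first the S-ring
automorphism, then the group automorphism). -/
def IsCIBlocks {G : Type*} [AddGroup G] (Bl : Set (Set G)) : Prop :=
  isoPerm Bl = {f | ∃ γ ∈ autPerm Bl, ∃ φ : G ≃+ G, ∀ x, f x = φ (γ x)}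

/-- The right translation `x ↦ x + g` as a permutation. -/
def addRightPerm {G : Type*} [AddGroup G] (g : G) : Equiv.Perm G := Equiv.addRight g

/-- `G_r`, the set of right translations of `G`. -/
def rSet (G : Type*) [AddGroup G] : Set (Equiv.Perm G) := Set.range addRightPerm

/-- The basic sets of `V(K,G)`: the orbits on `G` of the stabilizer `K_e` of the
identity in `K`. -/
def VBlocks {G : Type*} [AddGroup G] (K : Set (Equiv.Perm G)) : Set (Set G) :=
  {O | ∃ g : G, O = {h | ∃ k ∈ K, k 0 = 0 ∧ k g = h}}

/-- An S-ring is schurian if it equals `V(K,G)` for some `G_r ≤ K ≤ Sym(G)`. -/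
def IsSchurianBlocks {G : Type*} [AddGroup G] (Bl : Set (Set G)) : Prop :=
  ∃ K : Subgroup (Equiv.Perm G), rSet G ⊆ (K : Set (Equiv.Perm G)) ∧
    Bl = VBlocks (K : Set (Equiv.Perm G))

/-- `f` lies in the 2-closure of `K`: on every pair it agrees with some member of `K`. -/
def in2Closure {G : Type*} (K : Set (Equiv.Perm G)) (f : Equiv.Perm G) : Prop :=
  ∀ a b : G, ∃ k ∈ K, k a = f a ∧ k b = f b

/-- `K` is 2-closed: `K = K^(2)`. -/
def Is2Closed {G : Type*} (K : Subgroup (Equiv.Perm G)) : Prop :=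
  ∀ f, in2Closure (K : Set (Equiv.Perm G)) f → f ∈ K

/-- Conjugate `S^γ` of a set of permutations. -/
def conjSet {G : Type*} (γ : Equiv.Perm G) (S : Set (Equiv.Perm G)) : Set (Equiv.Perm G) :=
  (fun s => γ⁻¹ * s * γ) '' S

/-- `K1 ⪯_G K2`: `K1` is a `G`-complete subgroup of `K2`. -/
def GComplete {G : Type*} [AddGroup G] (K1 K2 : Subgroup (Equiv.Perm G)) : Prop :=
  K1 ≤ K2 ∧ ∀ γ : Equiv.Perm G, conjSet γ (rSet G) ⊆ (K2 : Set (Equiv.Perm G)) →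
    ∃ δ ∈ K2, conjSet δ (conjSet γ (rSet G)) ⊆ (K1 : Set (Equiv.Perm G))

/-- `K ∈ Sup_2(G_r)`: `K` is a 2-closed subgroup of `Sym(G)` containing `G_r`. -/
def InSup2 {G : Type*} [AddGroup G] (K : Subgroup (Equiv.Perm G)) : Prop :=
  rSet G ⊆ (K : Set (Equiv.Perm G)) ∧ Is2Closed K

/-- `K ∈ Sup_2^min(G_r)`: `K` is a minimal element of `(Sup_2(G_r), ⪯_G)`. -/
def InSup2Min {G : Type*} [AddGroup G] (K : Subgroup (Equiv.Perm G)) : Prop :=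
  InSup2 K ∧ ∀ K' : Subgroup (Equiv.Perm G), InSup2 K' → GComplete K' K → K' = K

/-! ### A-sets, A-subgroups, sections, radicals, products -/

/-- `X` is an `A`-set: a union of basic sets. -/
def IsASet {G : Type*} [AddGroup G] (Bl : Set (Set G)) (X : Set G) : Prop :=
  ∃ C ⊆ Bl, X = ⋃₀ C

/-- An `A`-subgroup. -/
def IsASubgroup {G : Type*} [AddGroup G] (Bl : Set (Set G)) (U : AddSubgroup G) : Prop :=
  IsASet Bl (U : Set G)

/-- The radical `rad(X) = {g : g + X = X + g = X}`. -/
def radSet {G : Type*} [AddGroup G] (X : Set G) : Set G :=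
  {g | (fun x => g + x) '' X = X ∧ (fun x => x + g) '' X = X}

/-- `A` is the `S`-wreath (generalized wreath) product for the section `S = U/L`. -/
def IsWreath {G : Type*} [AddGroup G] (Bl : Set (Set G)) (U L : AddSubgroup G) : Prop :=
  IsASubgroup Bl U ∧ IsASubgroup Bl L ∧ L ≤ U ∧ L.Normal ∧
    ∀ X ∈ Bl, ¬X ⊆ (U : Set G) → (L : Set G) ⊆ radSet X

/-- Nontrivial (proper) `S`-wreath product. -/
def IsNontrivialWreath {G : Type*} [AddGroup G] (Bl : Set (Set G))
    (U L : AddSubgroup G) : Prop :=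
  IsWreath Bl U L ∧ L ≠ ⊥ ∧ U ≠ ⊤

/-- `A` is decomposable: a nontrivial generalized wreath product. -/
def IsDecomposable {G : Type*} [AddGroup G] (Bl : Set (Set G)) : Prop :=
  ∃ U L : AddSubgroup G, IsNontrivialWreath Bl U L

/-! ### Cyclotomic S-rings, Cayley minimality, 2-minimality, normality -/

/-- The set of orbits on `G` of a group `M` of automorphisms of `G`. -/
def autOrbits {G : Type*} [AddGroup G] (M : AddSubgroup (AddAut G)) : Set (Set G) :=
  {O | ∃ g : G, O = {h | ∃ φ ∈ M, φ g = h}}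

/-- An S-ring is cyclotomic if its basic sets are the orbits of a group of
automorphisms of `G`. -/
def IsCyclotomic {G : Type*} [AddGroup G] (Bl : Set (Set G)) : Prop :=
  ∃ M : AddSubgroup (AddAut G), Bl = autOrbits M

/-- `aut_G(A) = Aut(A) ∩ Aut(G)`. -/
def autAddSet {G : Type*} [AddGroup G] (Bl : Set (Set G)) : Set (AddAut G) :=
  {φ | (φ : G ≃+ G).toEquiv ∈ autPerm Bl}

/-- Two sets of automorphisms have the same orbits on `G`. -/
def sameAutOrbits {G : Type*} [AddGroup G] (K M : Set (AddAut G)) : Prop :=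
  ∀ g : G, {h | ∃ φ ∈ K, φ g = h} = {h | ∃ φ ∈ M, φ g = h}

/-- A (cyclotomic) S-ring is Cayley minimal if the only subgroup of `Aut(G)` Cayley
equivalent to `aut_G(A)` is `aut_G(A)` itself. -/
def IsCayleyMinimal {G : Type*} [AddGroup G] (Bl : Set (Set G)) : Prop :=
  IsCyclotomic Bl ∧ ∀ K : AddSubgroup (AddAut G),
    sameAutOrbits (K : Set (AddAut G)) (autAddSet Bl) →
      (K : Set (AddAut G)) = autAddSet Bl

/-- Two sets of permutations have the same orbits on `G × G`. -/
def samePairOrbits {G : Type*} (K M : Set (Equiv.Perm G)) : Prop :=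
  ∀ a b : G, {c : G × G | ∃ f ∈ K, (f a, f b) = c} = {c : G × G | ∃ f ∈ M, (f a, f b) = c}

/-- An S-ring is 2-minimal if the only subgroup of `Sym(G)` containing `G_r` and
2-equivalent to `Aut(A)` is `Aut(A)` itself. -/
def Is2Minimal {G : Type*} [AddGroup G] (Bl : Set (Set G)) : Prop :=
  ∀ K : Subgroup (Equiv.Perm G), rSet G ⊆ (K : Set (Equiv.Perm G)) →
    samePairOrbits (K : Set (Equiv.Perm G)) (autPerm Bl) →
      (K : Set (Equiv.Perm G)) = autPerm Bl

/-- An S-ring is normal if `G_r` is normal in `Aut(A)`. -/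
def IsNormalBlocks {G : Type*} [AddGroup G] (Bl : Set (Set G)) : Prop :=
  ∀ σ ∈ autPerm Bl, ∀ t ∈ rSet G, σ * t * σ⁻¹ ∈ rSet G

/-- A set of permutations normalizes another one. -/
def normalizesInto {M : Type*} [Group M] (Δ N : Set M) : Prop :=
  ∀ σ ∈ Δ, ∀ t ∈ N, σ * t * σ⁻¹ ∈ N

/-! ### Kernels, restriction to subgroups, quotients and sections -/

/-- `Aut(A)_{G/L}`: the automorphisms of the S-ring fixing every `L`-coset setwise. -/
def kernelPerm {G : Type*} [AddGroup G] (Bl : Set (Set G)) (L : AddSubgroup G) :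
    Set (Equiv.Perm G) :=
  {f | f ∈ autPerm Bl ∧ ∀ g : G, ⇑f '' ((L : Set G) + {g}) = (L : Set G) + {g}}

/-- The basic sets of `A_U` (for an `A`-subgroup `U`), as subsets of `U`. -/
def subBlocks {G : Type*} [AddGroup G] (Bl : Set (Set G)) (U : AddSubgroup G) :
    Set (Set U) :=
  {Z | ∃ X ∈ Bl, X ⊆ (U : Set G) ∧ Z = ((Subtype.val) ⁻¹' X : Set U)}

/-- The basic sets of `A_{G/L}`: images of basic sets under `G → G/L`. -/
def quotBlocks {G : Type*} [AddGroup G] (Bl : Set (Set G)) (L : AddSubgroup G) :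
    Set (Set (G ⧸ L)) :=
  {Z | ∃ X ∈ Bl, Z = (QuotientAddGroup.mk : G → G ⧸ L) '' X}

/-- The basic sets of `A_S` for the section `S = U/L`: images under `U → U/L` of the
basic sets contained in `U`. -/
def secBlocks {G : Type*} [AddGroup G] (Bl : Set (Set G)) (U L : AddSubgroup G) :
    Set (Set (U ⧸ L.addSubgroupOf U)) :=
  {Z | ∃ X ∈ Bl, X ⊆ (U : Set G) ∧
    Z = (QuotientAddGroup.mk : U → U ⧸ L.addSubgroupOf U) '' {u : U | (u : G) ∈ X}}

/-- The permutations of an (invariant) subgroup `U` induced by members of `F`. -/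
def inducedPerm {G : Type*} [AddGroup G] (F : Set (Equiv.Perm G)) (U : AddSubgroup G) :
    Set (Equiv.Perm U) :=
  {σ | ∃ f ∈ F, ∀ x : U, (σ x : G) = f (x : G)}

/-- The automorphisms of an (invariant) subgroup `U` induced by members of `F ⊆ Aut(G)`. -/
def inducedAddAut {G : Type*} [AddGroup G] (F : Set (AddAut G)) (U : AddSubgroup G) :
    Set (AddAut U) :=
  {σ | ∃ φ ∈ F, ∀ x : U, ((σ x : U) : G) = φ (x : G)}

/-- `S^f = S`: the permutation `f` maps `U` onto itself and permutes the `L`-cosets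
inside `U`. -/
def secInvariant {G : Type*} [AddGroup G] (f : Equiv.Perm G) (U L : AddSubgroup G) : Prop :=
  ⇑f '' (U : Set G) = (U : Set G) ∧
    ∀ u ∈ U, ⇑f '' ((L : Set G) + {u}) = (L : Set G) + {f u}

/-- `σ` is the bijection `f^S` of the section `S = U/L` induced by `f`. -/
def inducesOnSec {G : Type*} [AddGroup G] (f : Equiv.Perm G) (U L : AddSubgroup G)
    (σ : Equiv.Perm (U ⧸ L.addSubgroupOf U)) : Prop :=
  ∀ u v : U, f (u : G) = (v : G) →
    σ (QuotientAddGroup.mk u) = QuotientAddGroup.mk v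

/-- `Δ^S`: the bijections of the section `S = U/L` induced by members of `Δ`
leaving `S` invariant. -/
def secPerms {G : Type*} [AddGroup G] (F : Set (Equiv.Perm G)) (U L : AddSubgroup G) :
    Set (Equiv.Perm (U ⧸ L.addSubgroupOf U)) :=
  {σ | ∃ f ∈ F, secInvariant f U L ∧ inducesOnSec f U L σ}

/-- `K^S` for `K ≤ Aut(U)`: automorphisms of `S = U/L` induced by members of `K`. -/
def secAutOfSub {G : Type*} [AddCommGroup G] (U L : AddSubgroup G)
    (K : Set (AddAut U)) : Set (AddAut (U ⧸ L.addSubgroupOf U)) :=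
  {ψ | ∃ φ ∈ K, ∀ u : U, ψ (QuotientAddGroup.mk u) = QuotientAddGroup.mk (φ u)}

/-- `K^S` for `K ≤ Aut(G/L)`: automorphisms of `S = U/L` obtained by restricting
members of `K`. -/
def secAutOfQuot {G : Type*} [AddCommGroup G] (U L : AddSubgroup G)
    (K : Set (AddAut (G ⧸ L))) : Set (AddAut (U ⧸ L.addSubgroupOf U)) :=
  {ψ | ∃ φ ∈ K, ∀ u v : U,
    φ (QuotientAddGroup.mk (u : G)) = QuotientAddGroup.mk (v : G) →
      ψ (QuotientAddGroup.mk u) = QuotientAddGroup.mk v}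

/-! ### p-S-rings and some particular S-rings -/

/-- A `p`-S-ring: all basic sets have `p`-power size. -/
def IsPSRing {G : Type*} [AddGroup G] (p : ℕ) (Bl : Set (Set G)) : Prop :=
  ∀ X ∈ Bl, ∃ k : ℕ, X.ncard = p ^ k

/-- The family `Bl` of basic sets is that of `ℤC_p ≀ ℤC_p ≀ ℤC_p`: singletons in `B1`,
`B1`-cosets in `B2 \ B1`, and `B2`-cosets outside `B2`. -/
def IsWr3Blocks {G : Type*} [AddGroup G] (p : ℕ) (Bl : Set (Set G)) : Prop :=
  ∃ B1 B2 : AddSubgroup G, B1 < B2 ∧ (B1 : Set G).ncard = p ∧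
    (B2 : Set G).ncard = p ^ 2 ∧
    ∀ X : Set G, X ∈ Bl ↔
      ((∃ x ∈ B1, X = {x}) ∨
        (∃ x ∈ (B2 : Set G) \ (B1 : Set G), X = (B1 : Set G) + {x}) ∨
        (∃ x ∈ (Set.univ : Set G) \ (B2 : Set G), X = (B2 : Set G) + {x}))

/-- The family `Bl` of basic sets is that of `ℤC_p ≀ ℤC_p²`: singletons in `B1` and
`B1`-cosets outside `B1`. -/
def IsWrCpCp2Blocks {G : Type*} [AddGroup G] (p : ℕ) (Bl : Set (Set G)) : Prop :=
  ∃ B1 : AddSubgroup G, (B1 : Set G).ncard = p ∧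
    ∀ X : Set G, X ∈ Bl ↔
      ((∃ x ∈ B1, X = {x}) ∨ (∃ x : G, x ∉ B1 ∧ X = (B1 : Set G) + {x}))

/-- The unipotent map `σ(x,y,z) = (x, x+y, y+z)` on `(ℤ/p)³` defining `D_p`. -/
def dpStep (p : ℕ) (v : Fin 3 → ZMod p) : Fin 3 → ZMod p :=
  ![v 0, v 0 + v 1, v 1 + v 2]

/-- The orbit of a point under the cyclic group generated by `σ`. -/
def dpOrbit (p : ℕ) (x : Fin 3 → ZMod p) : Set (Fin 3 → ZMod p) :=
  {y | ∃ k : ℕ, (dpStep p)^[k] x = y}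

/-- The family `Bl` of basic sets is (isomorphic to) that of the S-ring `D_p`. -/
def IsDpBlocks {W : Type*} [AddGroup W] (p : ℕ) (Bl : Set (Set W)) : Prop :=
  ∃ e : W ≃+ (Fin 3 → ZMod p), (fun X => ⇑e '' X) '' Bl = Set.range (dpOrbit p)

/-! ### Cayley graph automorphisms and regular subgroups -/

/-- `Aut(Cay(G,X))`. -/
def autCaySet {G : Type*} [AddGroup G] (X : Set G) : Set (Equiv.Perm G) :=
  {f | pmap f (arcs X) = arcs X}

/-- A regular subgroup of `Sym(G)`: transitive, and only the identity has a fixed point. -/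
def IsRegularSubgroup {G : Type*} (K : Subgroup (Equiv.Perm G)) : Prop :=
  (∀ a b : G, ∃ k ∈ K, k a = b) ∧ ∀ k ∈ K, (∃ a : G, k a = a) → k = 1

/-! ### The groups `C_p^4 × C_q` -/

/-- The Sylow `p`-subgroup `P` of `C_p^4 × C_q`. -/
def Psub (p q : ℕ) : AddSubgroup ((Fin 4 → ZMod p) × ZMod q) :=
  (⊤ : AddSubgroup (Fin 4 → ZMod p)).prod ⊥

/-- The Sylow `q`-subgroup `Q` of `C_p^4 × C_q`. -/
def Qsub (p q : ℕ) : AddSubgroup ((Fin 4 → ZMod p) × ZMod q) :=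
  (⊥ : AddSubgroup (Fin 4 → ZMod p)).prod ⊤

/-!
An automorphism `φ` of `G` preserves the arc set `R(X)` iff `φ X = X`, so `aut_G(A)` consists of
the automorphisms that fix `A1` pointwise and move every point of `A2` inside its `A1`-coset and
every point of `G` inside its `A2`-coset. Viewing `G` as an `𝔽_p`-space, these are exactly the
maps `1 + N` with `N G ≤ A2`, `N A2 ≤ A1`, `N A1 = 0`. For `b ∈ A2 \ A1` and `c ∉ A2`, the set
`A1 ∪ {b, c}` generates `G` because both steps of the flag have prime index, so `φ` is determined
by `(φ b - b, φ c - c) ∈ A1 × A2`; conversely linear functionals vanishing on `A1` and on `A2`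
produce an `N` for every such pair.
Hence `|aut_G(A)| = |A1| |A2| = p³`.
-/

section ArcSets

variable {G : Type*} [AddGroup G]

lemma arcs_injective : Function.Injective (arcs : Set G → Set (G × G)) := by
  intro S T h
  ext x
  simpa [arcs] using congrArg (((0 : G), x) ∈ ·) h

lemma pmap_arcs (φ : G ≃+ G) (X : Set G) : pmap φ.toEquiv (arcs X) = arcs (φ '' X) := by
  ext ⟨g, h⟩
  simp only [pmap, arcs, Set.mem_image, Set.mem_ofPred_eq, Prod.exists, Prod.mk.injEq]
  constructor
  · rintro ⟨g', _, ⟨s, hs, rfl⟩, rfl, rfl⟩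
    exact ⟨φ s, ⟨s, hs, rfl⟩, map_add φ s g'⟩
  · rintro ⟨_, ⟨s, hs, rfl⟩, rfl⟩
    exact ⟨φ.symm g, s + φ.symm g, ⟨s, hs, rfl⟩, by simp, by simp⟩

lemma mem_autAddSet_iff {Bl : Set (Set G)} {φ : AddAut G} :
    φ ∈ autAddSet Bl ↔ ∀ X ∈ Bl, ⇑φ '' X = X := by
  simp only [autAddSet, autPerm, Set.mem_ofPred_eq, pmap_arcs, arcs_injective.eq_iff]

end ArcSets

namespace AddSubgroup

variable {G : Type*} [AddCommGroup G] {H : AddSubgroup G} {φ : AddAut G} {x : G}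

lemma mem_add_singleton_iff {y : G} : y ∈ (H : Set G) + {x} ↔ y - x ∈ H := by
  simp [Set.add_singleton, sub_eq_add_neg]

lemma sub_mem_of_image_add_singleton_eq (h : ⇑φ '' ((H : Set G) + {x}) = H + {x}) :
    φ x - x ∈ H := by
  rw [← mem_add_singleton_iff, ← h]
  exact Set.mem_image_of_mem _ (mem_add_singleton_iff.2 (by simp))

lemma image_add_singleton_eq (hH : ⇑φ '' H = H) (hx : φ x - x ∈ H) :
    ⇑φ '' ((H : Set G) + {x}) = H + {x} := by
  ext y
  rw [Set.image_add, Set.image_singleton, hH, mem_add_singleton_iff, mem_add_singleton_iff,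
    ← sub_sub_sub_cancel_right y (φ x) x, sub_eq_add_neg _ (φ x - x),
    H.add_mem_cancel_right (H.neg_mem hx)]

lemma image_eq_of_forall_sub_mem [Finite G] (h : ∀ x ∈ H, φ x - x ∈ H) : ⇑φ '' H = H := by
  have hsub : ⇑φ '' H ⊆ H := by
    rintro _ ⟨x, hx, rfl⟩
    simpa using H.add_mem (h x hx) hx
  exact Set.eq_of_subset_of_ncard_le hsub (Set.ncard_image_of_injective _ φ.injective).ge
    (Set.toFinite _)

theorem eq_of_lt_of_le_of_card_eq_mul_prime [Finite G] {p : ℕ} (hp : p.Prime)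
    {L K : AddSubgroup G} (hK : Nat.card K = Nat.card H * p) (hHL : H < L) (hLK : L ≤ K) :
    L = K := by
  obtain ⟨m, hm⟩ := card_dvd_of_le hHL.le
  have hmp : m ∣ p := by
    have := card_dvd_of_le hLK
    rw [hm, hK] at this
    exact Nat.dvd_of_mul_dvd_mul_left Nat.card_pos this
  rcases hp.eq_one_or_self_of_dvd m hmp with rfl | rfl
  · exact absurd (eq_of_le_of_card_ge hHL.le (by rw [hm, mul_one])) hHL.ne
  · exact eq_of_le_of_card_ge hLK (by rw [hK, hm])

end AddSubgroup

section Unitriangular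

variable {G : Type*} [AddCommGroup G]

def unitriangularAddAut (A1 A2 : AddSubgroup G) : Set (AddAut G) :=
  {φ | (∀ a ∈ A1, φ a = a) ∧ (∀ x ∈ A2, φ x - x ∈ A1) ∧ ∀ x, φ x - x ∈ A2}

theorem autAddSet_eq_unitriangularAddAut [Finite G] {A1 A2 : AddSubgroup G} (hle : A1 ≤ A2)
    {Bl : Set (Set G)}
    (hBl : ∀ X : Set G, X ∈ Bl ↔
      ((∃ x ∈ A1, X = {x}) ∨
        (∃ x ∈ (A2 : Set G) \ (A1 : Set G), X = (A1 : Set G) + {x}) ∨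
        (∃ x ∈ (Set.univ : Set G) \ (A2 : Set G), X = (A2 : Set G) + {x}))) :
    autAddSet Bl = unitriangularAddAut A1 A2 := by
  ext φ
  rw [mem_autAddSet_iff]
  constructor
  · intro h
    have hA1 : ∀ a ∈ A1, φ a = a := fun a ha => by
      simpa using h {a} ((hBl _).2 (.inl ⟨a, ha, rfl⟩))
    have hA2 : ∀ x ∈ A2, φ x - x ∈ A1 := fun x hx => by
      by_cases hx1 : x ∈ A1
      · simp [hA1 x hx1]
      · exact AddSubgroup.sub_mem_of_image_add_singleton_eq
          (h _ ((hBl _).2 (.inr (.inl ⟨x, ⟨hx, hx1⟩, rfl⟩))))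
    refine ⟨hA1, hA2, fun x => ?_⟩
    by_cases hx2 : x ∈ A2
    · exact hle (hA2 x hx2)
    · exact AddSubgroup.sub_mem_of_image_add_singleton_eq
        (h _ ((hBl _).2 (.inr (.inr ⟨x, ⟨trivial, hx2⟩, rfl⟩))))
  · rintro ⟨hA1, hA2, hG⟩ X hX
    rcases (hBl X).1 hX with ⟨a, ha, rfl⟩ | ⟨x, ⟨hx, -⟩, rfl⟩ | ⟨x, -, rfl⟩
    · rw [Set.image_singleton, hA1 a ha]
    · refine AddSubgroup.image_add_singleton_eq
        (AddSubgroup.image_eq_of_forall_sub_mem fun a ha => ?_) (hA2 x hx)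
      simp [hA1 a ha]
    · exact AddSubgroup.image_add_singleton_eq
        (AddSubgroup.image_eq_of_forall_sub_mem fun x hx => hle (hA2 x hx)) (hG x)

theorem AddMonoidHom.eq_of_eqOn_flag [Finite G] {M : Type*} [AddMonoid M] {p : ℕ}
    (hp : p.Prime) {A1 A2 : AddSubgroup G} (hle : A1 ≤ A2)
    (hA2 : Nat.card A2 = Nat.card A1 * p) (hG : Nat.card G = Nat.card A2 * p)
    {b c : G} (hb : b ∈ A2) (hb1 : b ∉ A1) (hc : c ∉ A2) {f g : G →+ M}
    (hA1 : Set.EqOn f g A1) (hfb : f b = g b) (hfc : f c = g c) : f = g := by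
  have hA2E : A2 ≤ f.eqLocus g := by
    have hlt : A1 < A2 ⊓ f.eqLocus g :=
      lt_of_le_of_ne (le_inf hle hA1) fun h => hb1 (h ▸ ⟨hb, hfb⟩)
    exact inf_eq_left.1 (AddSubgroup.eq_of_lt_of_le_of_card_eq_mul_prime hp hA2 hlt inf_le_left)
  have htop : f.eqLocus g = ⊤ :=
    AddSubgroup.eq_of_lt_of_le_of_card_eq_mul_prime hp (by rw [AddSubgroup.card_top, hG])
      (lt_of_le_of_ne hA2E fun h => hc (h ▸ hfc)) le_top
  exact AddMonoidHom.ext fun x => (htop ▸ AddSubgroup.mem_top x : x ∈ f.eqLocus g)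

lemma exists_linearEquiv_eq_add_of_isNilpotent {R M : Type*} [Semiring R] [AddCommGroup M]
    [Module R M] {N : Module.End R M} (hN : IsNilpotent N) :
    ∃ φ : M ≃ₗ[R] M, ∀ x, φ x = x + N x :=
  ⟨LinearEquiv.ofBijective (1 + N) ((Module.End.isUnit_iff _).1 hN.isUnit_one_add),
    fun _ => rfl⟩

theorem exists_mem_unitriangularAddAut {p : ℕ} [Fact p.Prime] [Module (ZMod p) G]
    {A1 A2 : AddSubgroup G} (hle : A1 ≤ A2) {b c : G} (hb : b ∈ A2) (hb1 : b ∉ A1) (hc : c ∉ A2)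
    {u v : G} (hu : u ∈ A1) (hv : v ∈ A2) :
    ∃ φ ∈ unitriangularAddAut A1 A2, φ b - b = u ∧ φ c - c = v := by
  obtain ⟨f, hf, hfc⟩ := LinearMap.exists_extend_of_notMem (p := A2.toZModSubmodule p)
    (0 : _ →ₗ[ZMod p] ZMod p) hc 1
  obtain ⟨g, hg, hgb⟩ := LinearMap.exists_extend_of_notMem (p := A1.toZModSubmodule p)
    (0 : _ →ₗ[ZMod p] ZMod p) hb1 1
  have hf0 : ∀ x ∈ A2, f x = 0 := fun x hx => by
    simpa using LinearMap.congr_fun hf ⟨x, hx⟩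
  have hg0 : ∀ x ∈ A1, g x = 0 := fun x hx => by
    simpa using LinearMap.congr_fun hg ⟨x, hx⟩
  -- the correction `- g c • u` cancels the `g`-part of `N` at `c`, so that `N c = v`
  have hw : v - g c • u ∈ A2 := A2.sub_mem hv (hle (ZMod.smul_mem hu _))
  let N : Module.End (ZMod p) G := f.smulRight (v - g c • u) + g.smulRight u
  have hN : ∀ x, N x = f x • (v - g c • u) + g x • u := fun _ => rfl
  have hNA1 : ∀ x ∈ A1, N x = 0 := fun x hx => by simp [hN, hf0 x (hle hx), hg0 x hx]
  have hNA2 : ∀ x ∈ A2, N x ∈ A1 := fun x hx => by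
    simpa [hN, hf0 x hx] using ZMod.smul_mem hu (g x)
  have hNG : ∀ x, N x ∈ A2 := fun x =>
    A2.add_mem (ZMod.smul_mem hw _) (hle (ZMod.smul_mem hu _))
  have hnil : IsNilpotent N :=
    ⟨3, LinearMap.ext fun x => by simpa [pow_succ] using hNA1 _ (hNA2 _ (hNG x))⟩
  obtain ⟨φ, hφ⟩ := exists_linearEquiv_eq_add_of_isNilpotent hnil
  have hφN : ∀ x, φ x - x = N x := fun x => by rw [hφ, add_sub_cancel_left]
  refine ⟨φ.toAddEquiv, ⟨fun a ha => ?_, fun x hx => ?_, fun x => ?_⟩, ?_, ?_⟩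
  · simpa [hφ] using hNA1 a ha
  · exact hφN x ▸ hNA2 x hx
  · exact hφN x ▸ hNG x
  · simp [hφN, hN, hf0 b hb, hgb]
  · simp [hφN, hN, hfc]

theorem ncard_unitriangularAddAut [Finite G] {p : ℕ} [Fact p.Prime] [Module (ZMod p) G]
    {A1 A2 : AddSubgroup G} (h12 : A1 < A2)
    (hA2 : Nat.card A2 = Nat.card A1 * p) (hG : Nat.card G = Nat.card A2 * p) :
    (unitriangularAddAut A1 A2).ncard = Nat.card A1 * Nat.card A2 := by
  have hp : p.Prime := Fact.out
  obtain ⟨b, hb, hb1⟩ := SetLike.exists_of_lt h12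
  obtain ⟨c, hc⟩ : ∃ c, c ∉ A2 := by
    by_contra! h
    rw [(AddSubgroup.eq_top_iff' A2).2 h, AddSubgroup.card_top] at hG
    exact hp.one_lt.ne' ((mul_eq_left₀ Nat.card_pos.ne').1 hG.symm)
  have hbij : Set.BijOn (fun φ : AddAut G => (φ b - b, φ c - c)) (unitriangularAddAut A1 A2)
      ((A1 : Set G) ×ˢ (A2 : Set G)) := by
    refine ⟨fun φ hφ => ⟨hφ.2.1 b hb, hφ.2.2 c⟩, fun φ hφ ψ hψ h => ?_, ?_⟩
    · simp only [Prod.mk.injEq, sub_left_inj] at h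
      exact AddEquiv.toAddMonoidHom_injective <|
        AddMonoidHom.eq_of_eqOn_flag hp h12.le hA2 hG hb hb1 hc
          (fun a ha => (hφ.1 a ha).trans (hψ.1 a ha).symm) h.1 h.2
    · rintro ⟨u, v⟩ ⟨hu, hv⟩
      obtain ⟨φ, hφ, hφb, hφc⟩ := exists_mem_unitriangularAddAut (p := p) h12.le hb hb1 hc hu hv
      exact ⟨φ, hφ, Prod.ext hφb hφc⟩
  rw [← hbij.injOn.ncard_image, hbij.image_eq, Set.ncard_prod,
    ← Nat.card_coe_set_eq, ← Nat.card_coe_set_eq, SetLike.coe_sort_coe, SetLike.coe_sort_coe]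

end Unitriangular

/-- For the S-ring `A ≅ ℤC_p ≀ ℤC_p ≀ ℤC_p` over an elementary abelian
`p`-group of rank `3`, one has `|aut_G(A)| = p³`. -/
theorem statement9 (p : ℕ) (hp : p.Prime) (G : Type*) [AddCommGroup G] [Finite G]
    (hGp : ∀ g : G, p • g = 0) (hcard : Nat.card G = p ^ 3)
    (A1 A2 : AddSubgroup G) (h12 : A1 < A2)
    (hA1 : (A1 : Set G).ncard = p) (hA2 : (A2 : Set G).ncard = p ^ 2)
    (A : SRing G)
    (hblocks : ∀ X : Set G, X ∈ A.blocks ↔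
      ((∃ x ∈ A1, X = {x}) ∨
        (∃ x ∈ (A2 : Set G) \ (A1 : Set G), X = (A1 : Set G) + {x}) ∨
        (∃ x ∈ (Set.univ : Set G) \ (A2 : Set G), X = (A2 : Set G) + {x}))) :
    (autAddSet A.blocks).ncard = p ^ 3 := by
  have : Fact p.Prime := ⟨hp⟩
  let _ : Module (ZMod p) G := AddCommGroup.zmodModule hGp
  rw [← Nat.card_coe_set_eq, SetLike.coe_sort_coe] at hA1 hA2
  rw [autAddSet_eq_unitriangularAddAut h12.le hblocks,
    ncard_unitriangularAddAut h12 (by rw [hA1, hA2, sq]) (by rw [hcard, hA2]; ring), hA1, hA2]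
  ring
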